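/- arXiv:2510.06533 — 9 statements merged into one kernel-verified Lean document; each statement's English description precedes it below -/
import Mathlib

section
/- The instance (2, 3, 5) is not covering-schedulable: there is no function S : ℤ → Fin 3 such that for each i, agent i is assigned at most once in any interval of a_i consecutive days (where a = (2,3,5)) and every day some agent is assigned. -/
/-- Covering-schedulability of an instance of periods `a`. -/
def Schedulable {k : ℕ} (a : Fin k → ℤ) : Prop :=
  ∃ S : ℤ → Fin k, ∀ (i : Fin k) (m : ℤ),
    Set.Subsingleton {t : ℤ | m ≤ t ∧ t < m + a i ∧ S t = i}

/-! No four consecutive days can be covered by agents 0 and 1 alone: of the two middle days one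
belongs to agent 1 (agent 0 never works two days in a row), and then the two days on its far side
both belong to agent 0. So agent 2 works on some day `d`, and again within days `d + 1, …, d + 4`,
against its period 5. -/

section Spacing

variable {β : Type*}

def SpacedAt (S : ℤ → β) (i : β) (a : ℤ) : Prop :=
  ∀ ⦃s t : ℤ⦄, S s = i → S t = i → s < t → s + a ≤ t

theorem spacedAt_of_subsingleton {S : ℤ → β} {i : β} {a : ℤ}
    (h : ∀ m : ℤ, Set.Subsingleton {t : ℤ | m ≤ t ∧ t < m + a ∧ S t = i}) : SpacedAt S i a := by
  intro s t hs ht hst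
  by_contra! hta
  have : s = t := h s ⟨le_rfl, by omega, hs⟩ ⟨hst.le, hta, ht⟩
  omega

theorem exists_ne_ne_of_spacedAt_two_three {S : ℤ → β} {i j : β}
    (hi : SpacedAt S i 2) (hj : SpacedAt S j 3) (t : ℤ) :
    ∃ x ∈ Set.Ico t (t + 4), S x ≠ i ∧ S x ≠ j := by
  by_contra! hnone
  have hcover (x : ℤ) (h₁ : t ≤ x) (h₂ : x < t + 4) : S x = i ∨ S x = j :=
    or_iff_not_imp_left.2 (hnone x ⟨h₁, h₂⟩)
  rcases hcover (t + 1) (by omega) (by omega) with h₁ | h₁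
  · have h₂ : S (t + 2) = j := (hcover _ (by omega) (by omega)).resolve_left
      fun h₂ => absurd (hi h₁ h₂ (by omega)) (by omega)
    have h₀ : S t = i := (hcover t le_rfl (by omega)).resolve_right
      fun h₀ => absurd (hj h₀ h₂ (by omega)) (by omega)
    exact absurd (hi h₀ h₁ (by omega)) (by omega)
  · have h₂ : S (t + 2) = i := (hcover _ (by omega) (by omega)).resolve_right
      fun h₂ => absurd (hj h₁ h₂ (by omega)) (by omega)
    have h₃ : S (t + 3) = i := (hcover _ (by omega) (by omega)).resolve_right
      fun h₃ => absurd (hj h₁ h₃ (by omega)) (by omega)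
    exact absurd (hi h₂ h₃ (by omega)) (by omega)

end Spacing

/-- The instance (2, 3, 5) is not covering-schedulable. -/
theorem not_schedulable_two_three_five : ¬ Schedulable ![2, 3, 5] := by
  rintro ⟨S, h⟩
  have hS (i : Fin 3) : SpacedAt S i (![2, 3, 5] i) := spacedAt_of_subsingleton (h i)
  have agent_two (t : ℤ) : ∃ x ∈ Set.Ico t (t + 4), S x = 2 := by
    obtain ⟨x, hx, h₀, h₁⟩ := exists_ne_ne_of_spacedAt_two_three (hS 0) (hS 1) t
    exact ⟨x, hx, by revert h₀ h₁; generalize S x = y; decide +revert⟩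
  obtain ⟨d, -, hd⟩ := agent_two 0
  obtain ⟨e, ⟨hde, hed⟩, he⟩ := agent_two (d + 1)
  have : d + 5 ≤ e := hS 2 hd he (by omega)
  omega
end

section
/- The instance (3, 5, 5, 5, 7) is covering-schedulable, witnessed by the 21-periodic schedule assigning agent 1 on days ≡ 0,3,7,10,14,17, agent 2 on days ≡ 1,6,11,16, agent 3 on days ≡ 2,8,13,18, agent 4 on days ≡ 4,9,15,20, and agent 5 on days ≡ 5,12,19 (mod 21). -/
/-!
Two days of a `p`-periodic schedule whose residues mod `p` differ by `r` are at least
`min r (p - r)` apart. So the window condition for agent `i` holds as soon as, on a single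
period, any two distinct days of agent `i` are at cyclic distance at least `aᵢ` (and `aᵢ ≤ p`,
which covers days with equal residues). For the 21-periodic schedule this is a finite check.
-/

lemma subsingleton_window_of_le_abs_sub {P : ℤ → Prop} {a : ℤ}
    (h : ∀ t t', P t → P t' → t ≠ t' → a ≤ |t - t'|) (m : ℤ) :
    {t : ℤ | m ≤ t ∧ t < m + a ∧ P t}.Subsingleton := by
  rintro t ⟨hmt, hta, hPt⟩ t' ⟨hmt', hta', hPt'⟩
  by_contra hne
  have hclose : |t - t'| < a := abs_sub_lt_iff.2 ⟨by omega, by omega⟩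
  exact (h t t' hPt hPt' hne).not_gt hclose

lemma Int.le_abs_of_le_emod_of_emod_le_sub {a d p : ℤ} (h₁ : a ≤ d % p) (h₂ : d % p ≤ p - a) :
    a ≤ |d| := by
  have hd : d % p + p * (d / p) = d := Int.emod_add_mul_ediv d p
  rcases le_or_gt a 0 with ha | ha
  · exact ha.trans (abs_nonneg d)
  have hp : 0 < p := by omega
  rcases le_or_gt 0 (d / p) with hq | hq
  · have : 0 ≤ p * (d / p) := mul_nonneg hp.le hq
    exact le_abs.2 (Or.inl (by omega))
  · have : p * (d / p) ≤ -p := by nlinarith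
    exact le_abs.2 (Or.inr (by omega))

/-- The `p`-periodic schedule that follows `v` on the days `0, …, p - 1`. -/
def periodicSchedule {α : Type*} {p : ℕ} [NeZero p] (v : Fin p → α) (t : ℤ) : α :=
  v (Fin.ofNat p (t % p).toNat)

lemma Fin.natCast_val_ofNat_toNat_emod (p : ℕ) [NeZero p] (t : ℤ) :
    ((Fin.ofNat p (t % p).toNat : ℕ) : ℤ) = t % p := by
  have hp : (0 : ℤ) < p := by exact_mod_cast Nat.pos_of_neZero p
  have h₀ : 0 ≤ t % p := Int.emod_nonneg t hp.ne'
  have h₁ : t % p < p := Int.emod_lt_of_pos t hp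
  rw [Fin.val_ofNat, Int.natCast_mod, Int.toNat_of_nonneg h₀, Int.emod_eq_of_lt h₀ h₁]

lemma subsingleton_window_periodicSchedule {α : Type*} {p : ℕ} [NeZero p] (v : Fin p → α)
    (i : α) {a : ℤ} (hap : a ≤ p)
    (hgap : ∀ r s : Fin p, v r = i → v s = i → r ≠ s →
      a ≤ ((r : ℤ) - s) % p ∧ ((r : ℤ) - s) % p ≤ p - a)
    (m : ℤ) : {t : ℤ | m ≤ t ∧ t < m + a ∧ periodicSchedule v t = i}.Subsingleton := by
  refine subsingleton_window_of_le_abs_sub (fun t t' ht ht' hne => ?_) m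
  set r : Fin p := Fin.ofNat p (t % p).toNat
  set s : Fin p := Fin.ofNat p (t' % p).toNat
  have hr : ((r : ℕ) : ℤ) = t % p := Fin.natCast_val_ofNat_toNat_emod p t
  have hs : ((s : ℕ) : ℤ) = t' % p := Fin.natCast_val_ofNat_toNat_emod p t'
  by_cases hrs : r = s
  · have hdvd : (p : ℤ) ∣ |t - t'| :=
      (dvd_abs _ _).2 (Int.ModEq.dvd (show t' % p = t % p by rw [← hr, ← hs, hrs]))
    have hpos : 0 < |t - t'| := abs_pos.2 (sub_ne_zero.2 hne)
    exact hap.trans (Int.le_of_dvd hpos hdvd)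
  · have hdiff : ((r : ℤ) - s) % p = (t - t') % p := by rw [hr, hs, ← Int.sub_emod]
    obtain ⟨h₁, h₂⟩ := hgap r s ht ht' hrs
    rw [hdiff] at h₁ h₂
    exact Int.le_abs_of_le_emod_of_emod_le_sub h₁ h₂

def schedule21 : Fin 21 → Fin 5 :=
  ![0, 1, 2, 0, 3, 4, 1, 0, 2, 3, 0, 1, 4, 2, 0, 3, 1, 0, 2, 4, 3]

def windowLength : Fin 5 → ℤ := ![3, 5, 5, 5, 7]

lemma windowLength_le (i : Fin 5) : windowLength i ≤ 21 := by
  fin_cases i <;> decide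

lemma schedule21_gap : ∀ (i : Fin 5) (r s : Fin 21), schedule21 r = i → schedule21 s = i →
    r ≠ s → windowLength i ≤ ((r : ℤ) - s) % 21 ∧ ((r : ℤ) - s) % 21 ≤ 21 - windowLength i := by
  decide

/-- The instance (3, 5, 5, 5, 7) is covering-schedulable, witnessed by the 21-periodic
schedule from the paper (agents are 0-indexed here). -/
theorem schedulable_three_five_five_five_seven :
    ∃ S : ℤ → Fin 5,
      (∀ t : ℤ, S t =
        ![0, 1, 2, 0, 3, 4, 1, 0, 2, 3, 0, 1, 4, 2, 0, 3, 1, 0, 2, 4, 3]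
          (Fin.ofNat 21 (t % 21).toNat)) ∧
      ∀ (i : Fin 5) (m : ℤ),
        Set.Subsingleton {t : ℤ | m ≤ t ∧ t < m + (![3, 5, 5, 5, 7] : Fin 5 → ℤ) i ∧ S t = i} :=
  ⟨periodicSchedule schedule21, fun _ => rfl, fun i =>
    subsingleton_window_periodicSchedule schedule21 i (windowLength_le i) (schedule21_gap i)⟩
end

section
/- For every k ≥ 1, the instance B_k = (2, 3, 5, 9, …, 2^{k-1}+1) (i.e., a_i = 2^{i-1}+1 for i = 1,…,k) cannot cover 2^k consecutive days: there is no function S : [0, 2^k) ∩ ℤ → Fin k such that for each i, S assigns i at most once in any interval of a_i consecutive days within [0, 2^k). -/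
/-!
Let every day of an interval be assigned an agent `< N`, with two days of agent `i` always more
than `2 ^ i` apart. By induction on `N` the interval has fewer than `2 ^ N` days: otherwise every
window of `2 ^ (N - 1)` consecutive days inside the first `2 ^ N` days must contain agent `N - 1`
(by induction, applied to the window), so agent `N - 1` occurs at some `t` in the first window and
again in the window starting at `t + 1`, at distance at most `2 ^ (N - 1)` from `t`.
-/

open Set

def SpacedOn (f : ℤ → ℕ) (I : Set ℤ) : Prop :=
  ∀ s ∈ I, ∀ t ∈ I, s < t → f s = f t → s + 2 ^ f s < t

theorem SpacedOn.mono {f : ℤ → ℕ} {I J : Set ℤ} (h : SpacedOn f I) (hJI : J ⊆ I) :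
    SpacedOn f J :=
  fun s hs t ht hst hf => h s (hJI hs) t (hJI ht) hst hf

theorem lt_add_two_pow_of_spacedOn (f : ℤ → ℕ) (N : ℕ) {A B : ℤ}
    (hlt : ∀ t ∈ Ico A B, f t < N) (hf : SpacedOn f (Ico A B)) : B < A + 2 ^ N := by
  induction N generalizing A B with
  | zero =>
    by_contra! h
    exact (hlt A ⟨le_rfl, by simpa using h⟩).not_ge (Nat.zero_le _)
  | succ N ih =>
    by_contra! hB
    have hpow : (2 : ℤ) ^ (N + 1) = 2 ^ N + 2 ^ N := by ring
    have hpos : (0 : ℤ) < 2 ^ N := by positivity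
    have hits : ∀ a, A ≤ a → a + 2 ^ N ≤ B → ∃ t ∈ Ico a (a + 2 ^ N), f t = N := by
      intro a hAa haB
      by_contra! hno
      have hsub : Ico a (a + 2 ^ N) ⊆ Ico A B := Ico_subset_Ico hAa haB
      exact (ih (fun t ht => (Nat.lt_succ_iff.mp (hlt t (hsub ht))).lt_of_ne (hno t ht))
        (hf.mono hsub)).false
    obtain ⟨t₁, ⟨hAt₁, ht₁⟩, hft₁⟩ := hits A le_rfl (by linarith)
    obtain ⟨t₂, ⟨ht₂, ht₂'⟩, hft₂⟩ := hits (t₁ + 1) (by linarith) (by linarith)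
    have hgap := hf t₁ ⟨hAt₁, by linarith⟩ t₂ ⟨by linarith, by linarith⟩ (by linarith)
      (hft₁.trans hft₂.symm)
    rw [hft₁] at hgap
    linarith

theorem Bk_cannot_cover_interval_general (k : ℕ) :
    ¬ ∃ S : ℤ → Fin k, ∀ (i : Fin k) (m : ℤ),
      Set.Subsingleton
        {t : ℤ | 0 ≤ t ∧ t < 2 ^ k ∧ m ≤ t ∧ t < m + ((2 : ℤ) ^ (i : ℕ) + 1) ∧ S t = i} := by
  rintro ⟨S, hS⟩
  have hspaced : SpacedOn (fun t => S t) (Ico 0 (2 ^ k)) := by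
    intro s ⟨hs₀, hs⟩ t ⟨ht₀, ht⟩ hst hfst
    by_contra! hclose
    have hSst : S s = S t := Fin.ext hfst
    have hpos : (0 : ℤ) < 2 ^ (S s : ℕ) := by positivity
    exact hst.ne (hS (S s) s ⟨hs₀, hs, le_rfl, by linarith, rfl⟩
      ⟨ht₀, ht, hst.le, by linarith, hSst.symm⟩)
  have := lt_add_two_pow_of_spacedOn _ k (fun t _ => (S t).isLt) hspaced
  simp at this

/-- For every k ≥ 1, the instance B_k with periods 2^{i-1}+1 cannot cover the
2^k consecutive days [0, 2^k). -/
theorem Bk_cannot_cover_interval (k : ℕ) (hk : 1 ≤ k) :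
    ¬ ∃ S : ℤ → Fin k, ∀ (i : Fin k) (m : ℤ),
      Set.Subsingleton
        {t : ℤ | 0 ≤ t ∧ t < 2 ^ k ∧ m ≤ t ∧ t < m + ((2 : ℤ) ^ (i : ℕ) + 1) ∧ S t = i} :=
  Bk_cannot_cover_interval_general k
end

section
/- For every k ≥ 1, the instance B_k with periods a_i = 2^{i-1}+1 for i ∈ [k] is not covering-schedulable. -/
def RespectsPeriods {k : ℕ} (a : Fin k → ℤ) (S : ℤ → Fin k) : Prop :=
  ∀ ⦃t t' : ℤ⦄, t < t' → S t = S t' → a (S t) ≤ t' - t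

theorem schedulable_iff_exists_respectsPeriods {k : ℕ} {a : Fin k → ℤ} :
    Schedulable a ↔ ∃ S, RespectsPeriods a S := by
  refine exists_congr fun S => ⟨fun hS t t' htt' hSt => ?_, fun hS i m t ht t' ht' => ?_⟩
  · by_contra! hlt
    exact htt'.ne (hS (S t) t ⟨le_rfl, by omega, rfl⟩ ⟨htt'.le, by omega, hSt.symm⟩)
  · obtain ⟨hmt, htm, rfl⟩ := ht
    obtain ⟨hmt', htm', hSt'⟩ := ht'
    by_contra hne
    rcases lt_or_gt_of_ne hne with hlt | hlt
    · have := hS hlt hSt'.symm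
      omega
    · have := hS hlt hSt'
      rw [hSt'] at this
      omega

section GapsAtMostTwo

variable {N : Set ℤ} (hN : ∀ t, t ∈ N ∨ t + 1 ∈ N)
include hN

theorem Set.nonempty_orderIso_int_of_forall_mem_or_add_one_mem : Nonempty (ℤ ≃o N) := by
  classical
  have : NoMaxOrder N := ⟨fun x => by
    rcases hN (x + 1) with h | h
    · exact ⟨⟨x + 1, h⟩, by simp [← Subtype.coe_lt_coe]⟩
    · exact ⟨⟨x + 1 + 1, h⟩, by simp [← Subtype.coe_lt_coe]⟩⟩
  have : NoMinOrder N := ⟨fun x => by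
    rcases hN (x - 2) with h | h
    · exact ⟨⟨x - 2, h⟩, by simp [← Subtype.coe_lt_coe]⟩
    · exact ⟨⟨x - 2 + 1, h⟩, by simp [← Subtype.coe_lt_coe]; omega⟩⟩
  have : Nonempty N := (hN 0).elim (fun h => ⟨⟨0, h⟩⟩) fun h => ⟨⟨_, h⟩⟩
  let := LinearLocallyFiniteOrder.succOrder N
  let := LinearLocallyFiniteOrder.predOrder N
  exact ⟨orderIsoIntOfLinearSuccPredArch.symm⟩

theorem coe_orderIso_add_one_le_add_two (e : ℤ ≃o N) (n : ℤ) : (e (n + 1) : ℤ) ≤ e n + 2 := by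
  have next_le : ∀ m ∈ N, (e n : ℤ) < m → (e (n + 1) : ℤ) ≤ m := fun m hm hlt => by
    have : n < e.symm ⟨m, hm⟩ := e.lt_symm_apply.mpr hlt
    simpa [← Subtype.coe_le_coe] using e.monotone (Order.add_one_le_of_lt this)
  rcases hN (e n + 1) with h | h
  · linarith [next_le _ h (by omega)]
  · linarith [next_le _ h (by omega)]

theorem coe_orderIso_le_add_two_mul (e : ℤ ≃o N) {x y : ℤ} (hxy : x ≤ y) :
    (e y : ℤ) ≤ e x + 2 * (y - x) := by
  induction y, hxy using Int.leInduction with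
  | base => simp
  | succ y _ ih => linarith [coe_orderIso_add_one_le_add_two hN e y]

end GapsAtMostTwo

theorem Schedulable.of_succ {k : ℕ} {a : Fin (k + 1) → ℤ} {b : Fin k → ℤ} (ha : 2 ≤ a 0)
    (hab : ∀ i, 2 * b i ≤ a i.succ + 1) (h : Schedulable a) : Schedulable b := by
  obtain ⟨S, hS⟩ := schedulable_iff_exists_respectsPeriods.mp h
  set N : Set ℤ := {t | S t ≠ 0}
  have hN : ∀ t, t ∈ N ∨ t + 1 ∈ N := fun t => by
    by_contra! h
    simp only [N, Set.mem_ofPred_eq, not_not] at h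
    have := hS (lt_add_one t) (h.1.trans h.2.symm)
    rw [h.1] at this
    omega
  obtain ⟨e⟩ := Set.nonempty_orderIso_int_of_forall_mem_or_add_one_mem hN
  refine schedulable_iff_exists_respectsPeriods.mpr
    ⟨fun n => (S (e n)).pred (e n).2, fun x y hxy hT => ?_⟩
  have hSe : S (e x) = S (e y) := by simpa using congrArg Fin.succ hT
  have hgap := hS (e.strictMono hxy) hSe
  rw [← Fin.succ_pred (S (e x)) (e x).2] at hgap
  linarith [hab ((S (e x)).pred (e x).2), coe_orderIso_le_add_two_mul hN e hxy.le]

theorem Bk_not_schedulable_general (k : ℕ) :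
    ¬ Schedulable (fun i : Fin k => (2 : ℤ) ^ (i : ℕ) + 1) := by
  induction k with
  | zero => exact fun ⟨S, _⟩ => (S 0).elim0
  | succ k ih =>
    refine fun h => ih (h.of_succ (by norm_num) fun i => ?_)
    simp only [Fin.val_succ, pow_succ]
    omega

/-- For every k ≥ 1, the instance B_k with periods a_i = 2^{i-1}+1 is not
covering-schedulable. -/
theorem Bk_not_schedulable (k : ℕ) (hk : 1 ≤ k) :
    ¬ Schedulable (fun i : Fin k => (2 : ℤ) ^ (i : ℕ) + 1) :=
  Bk_not_schedulable_general k
end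

section
/- For every integer p ≥ 3, (Σ_{i=p+1}^∞ 1/(2^{i-1}+1)) · (2^{p+1}+1)/3 ≥ (1/3)(4 - 1/(2^p+1)) > α*, where α* = Σ_{i=1}^∞ 1/(2^{i-1}+1). -/
/-!
Both bounds come from comparing a tail `∑ 1/(2^(k+i)+1)` with geometric series of ratio `1/2`:
`2^(k+i) ≤ 2^(k+i) + 1 ≤ 2^i (2^k + 1)` gives `2/(2^k+1) ≤ ∑ ≤ 2/2^k`. The lower bound applied
after the first term of `β` yields `β ≥ 1/(2^p+1) + 2/(2^(p+1)+1)`, which is the first claim;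
the upper bound applied after the first four terms of `α` yields `α ≤ 1/2+1/3+1/5+1/9+1/8 < 35/27`,
while the middle quantity is at least `(4 - 1/9)/3 = 35/27` for `p ≥ 3`.
-/

lemma hasSum_two_pow_add_one_shift {k : ℕ} {s : ℝ}
    (h : HasSum (fun i : ℕ => 1 / ((2 : ℝ) ^ (k + i) + 1)) s) (m : ℕ) :
    HasSum (fun i : ℕ => 1 / ((2 : ℝ) ^ (k + m + i) + 1))
      (s - ∑ i ∈ Finset.range m, 1 / ((2 : ℝ) ^ (k + i) + 1)) := by
  refine ((hasSum_nat_add_iff' m).mpr h).congr_fun fun i => ?_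
  simp only [add_assoc, add_comm m]

lemma two_div_two_pow_add_one_le_of_hasSum {k : ℕ} {s : ℝ}
    (h : HasSum (fun i : ℕ => 1 / ((2 : ℝ) ^ (k + i) + 1)) s) :
    2 / ((2 : ℝ) ^ k + 1) ≤ s := by
  have hgeo := hasSum_geometric_two.mul_right (1 / ((2 : ℝ) ^ k + 1))
  rw [mul_one_div] at hgeo
  refine hasSum_le (fun i => ?_) hgeo h
  rw [one_div_pow, div_mul_div_comm, one_mul]
  refine one_div_le_one_div_of_le (by positivity) ?_
  rw [pow_add, mul_add_one, mul_comm]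
  gcongr
  exact one_le_pow₀ one_le_two

lemma le_two_div_two_pow_of_hasSum {k : ℕ} {s : ℝ}
    (h : HasSum (fun i : ℕ => 1 / ((2 : ℝ) ^ (k + i) + 1)) s) :
    s ≤ 2 / (2 : ℝ) ^ k := by
  have hgeo := hasSum_geometric_two.mul_right (1 / (2 : ℝ) ^ k)
  rw [mul_one_div] at hgeo
  refine hasSum_le (fun i => ?_) h hgeo
  rw [one_div_pow, div_mul_div_comm, one_mul, ← pow_add, add_comm i k]
  exact one_div_le_one_div_of_le (by positivity) (le_add_of_nonneg_right zero_le_one)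

/-- For every p ≥ 3, the tail sum bound
(∑_{i=p+1}^∞ 1/(2^{i-1}+1)) · (2^{p+1}+1)/3 ≥ (1/3)(4 - 1/(2^p+1)) > α*. -/
theorem case_four (p : ℕ) (hp : 3 ≤ p) (α β : ℝ)
    (hα : HasSum (fun i : ℕ => 1 / ((2 : ℝ) ^ i + 1)) α)
    (hβ : HasSum (fun i : ℕ => 1 / ((2 : ℝ) ^ (p + i) + 1)) β) :
    β * ((2 : ℝ) ^ (p + 1) + 1) / 3 ≥ (1 / 3) * (4 - 1 / ((2 : ℝ) ^ p + 1)) ∧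
    (1 / 3) * (4 - 1 / ((2 : ℝ) ^ p + 1)) > α := by
  have hβ_tail := two_div_two_pow_add_one_le_of_hasSum (hasSum_two_pow_add_one_shift hβ 1)
  have hα_le := le_two_div_two_pow_of_hasSum
    (hasSum_two_pow_add_one_shift (k := 0) (by simpa using hα) 4)
  simp only [Finset.sum_range_one, add_zero] at hβ_tail
  simp only [Finset.sum_range_succ, Finset.sum_range_zero] at hα_le
  norm_num at hα_le
  have hx : (8 : ℝ) ≤ 2 ^ p := by
    calc (8 : ℝ) = 2 ^ 3 := by norm_num
      _ ≤ 2 ^ p := pow_le_pow_right₀ one_le_two hp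
  rw [pow_succ] at hβ_tail ⊢
  set x : ℝ := 2 ^ p
  constructor
  · calc 1 / 3 * (4 - 1 / (x + 1)) = (1 / (x + 1) + 2 / (x * 2 + 1)) * (x * 2 + 1) / 3 := by
          field_simp
          ring
      _ ≤ β * (x * 2 + 1) / 3 := by gcongr; linarith
  · have hx_inv : 1 / (x + 1) ≤ 1 / 9 := one_div_le_one_div_of_le (by norm_num) (by linarith)
    linarith
end

section
/- Suppose A = (a_1,…,a_k) is a nondecreasing instance of positive integers that is not covering-schedulable, with Σ_i 1/a_i ≥ α*, and suppose that for each i ∈ [p] the prefix (a_1,…,a_i) is not covering-schedulable while each a_j ≤ 2^j for j ≤ p. Then a_i ∈ [2^{i-1}+1, 2^i] for all i ∈ [p]. (Claim 1, first part: if a_1 ≤ 2,…,a_{i-1} ≤ 2^{i-1}, (2,4,…,2^{i-1},2^{i-1}) is schedulable, and (a_1,…,a_i) is unschedulable, then a_i ≥ 2^{i-1}+1.) -/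
namespace Schedulable

theorem of_le {k : ℕ} {a b : Fin k → ℤ} (hb : Schedulable b) (hab : a ≤ b) : Schedulable a := by
  obtain ⟨S, hS⟩ := hb
  refine ⟨S, fun i m => (hS i m).anti ?_⟩
  rintro t ⟨hmt, htm, hSt⟩
  exact ⟨hmt, htm.trans_le (by linarith [hab i]), hSt⟩

theorem of_head_le_one {k : ℕ} (a : Fin (k + 1) → ℤ) (h : a 0 ≤ 1) : Schedulable a := by
  refine ⟨fun _ => 0, fun i m t₁ ht₁ t₂ ht₂ => ?_⟩
  obtain ⟨hm₁, hlt₁, rfl⟩ := ht₁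
  obtain ⟨hm₂, hlt₂, -⟩ := ht₂
  dsimp only at hlt₁ hlt₂
  omega

theorem cons_two_mul {k : ℕ} {b : Fin k → ℤ} (hb : Schedulable b) :
    Schedulable (Fin.cons 2 (fun i => 2 * b i) : Fin (k + 1) → ℤ) := by
  obtain ⟨S, hS⟩ := hb
  refine ⟨fun t => if t % 2 = 0 then 0 else (S (t / 2)).succ, fun i m => ?_⟩
  induction i using Fin.cases with
  | zero =>
    rintro t₁ ⟨hm₁, hlt₁, hS₁⟩ t₂ ⟨hm₂, hlt₂, hS₂⟩
    dsimp only at hS₁ hS₂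
    split_ifs at hS₁ hS₂ <;> simp only [Fin.succ_ne_zero] at hS₁ hS₂
    simp only [Fin.cons_zero] at hlt₁ hlt₂
    omega
  | succ i =>
    rintro t₁ ⟨hm₁, hlt₁, hS₁⟩ t₂ ⟨hm₂, hlt₂, hS₂⟩
    dsimp only at hS₁ hS₂
    split_ifs at hS₁ hS₂ <;> simp only [Fin.succ_inj, (Fin.succ_ne_zero i).symm] at hS₁ hS₂
    simp only [Fin.cons_succ] at hlt₁ hlt₂
    have hhalf : t₁ / 2 = t₂ / 2 :=
      hS i (m / 2) ⟨by omega, by omega, hS₁⟩ ⟨by omega, by omega, hS₂⟩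
    omega

end Schedulable

def rulerPeriods (n : ℕ) : Fin (n + 1) → ℤ := fun j => 2 ^ min ((j : ℕ) + 1) n

theorem rulerPeriods_succ (n : ℕ) :
    rulerPeriods (n + 1) = Fin.cons 2 (fun j => 2 * rulerPeriods n j) := by
  funext j
  induction j using Fin.cases with
  | zero => simp [rulerPeriods]
  | succ j => simp [rulerPeriods, Nat.succ_min_succ, pow_succ, mul_comm]

theorem schedulable_rulerPeriods (n : ℕ) : Schedulable (rulerPeriods n) := by
  induction n with
  | zero => exact Schedulable.of_head_le_one _ (by simp [rulerPeriods])
  | succ n ih => rw [rulerPeriods_succ]; exact ih.cons_two_mul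

/-- Claim 1, first part: under the stated hypotheses, a_i ∈ [2^{i-1}+1, 2^i]
for all i ∈ [p] (agents are 0-indexed here). -/
theorem claim_one {k p : ℕ} (hpk : p ≤ k) (a : Fin k → ℤ)
    (hpre : ∀ i : ℕ, 1 ≤ i → (hi : i ≤ p) →
      ¬ Schedulable (fun j : Fin i => a ⟨j.1, by omega⟩))
    (hle : ∀ j : Fin k, (j : ℕ) < p → a j ≤ 2 ^ ((j : ℕ) + 1)) :
    ∀ i : Fin k, (i : ℕ) < p →
      (2 : ℤ) ^ (i : ℕ) + 1 ≤ a i ∧ a i ≤ 2 ^ ((i : ℕ) + 1) := by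
  intro i hi
  refine ⟨?_, hle i hi⟩
  by_contra! hsmall
  refine hpre (i + 1) (by omega) (by omega) ((schedulable_rulerPeriods i).of_le fun j => ?_)
  show a _ ≤ 2 ^ min ((j : ℕ) + 1) i
  rcases Nat.lt_succ_iff_lt_or_eq.mp j.isLt with hj | hj
  · rw [min_eq_left hj]
    exact hle _ (by simp only; omega)
  · rw [min_eq_right (by omega), show (⟨j, _⟩ : Fin k) = i from Fin.ext hj]
    omega
end

section
/- Let A = (a_1,…,a_k) be an instance with k ≥ 2, and let A' be obtained from A by replacing the two agents with periods a_{k-1} ≤ a_k by a single agent with period min{a_{k-1}, ⌈a_k/2⌉}. If A' is covering-schedulable, then A is covering-schedulable. -/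
def Spaced (b : ℤ) (T : Set ℤ) : Prop :=
  ∀ s ∈ T, ∀ t ∈ T, s < t → b ≤ t - s

theorem Spaced.mono {b b' : ℤ} {T T' : Set ℤ} (h : Spaced b T) (hT : T' ⊆ T) (hb : b' ≤ b) :
    Spaced b' T' :=
  fun s hs t ht hst => hb.trans (h s (hT hs) t (hT ht) hst)

theorem schedulable_iff_spaced {k : ℕ} (a : Fin k → ℤ) :
    Schedulable a ↔ ∃ S : ℤ → Fin k, ∀ i, Spaced (a i) (S ⁻¹' {i}) := by
  refine exists_congr fun S => forall_congr' fun i => ⟨fun h s hs t ht hst => ?_, fun h m => ?_⟩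
  · by_contra! hlt
    have := h s ⟨le_rfl, by omega, hs⟩ ⟨hst.le, by omega, ht⟩
    omega
  · rintro s ⟨hms, hsm, hs⟩ t ⟨hmt, htm, ht⟩
    rcases lt_trichotomy s t with hst | rfl | hts
    · have := h s hs t ht hst; omega
    · rfl
    · have := h t ht s hs hts; omega

theorem ncard_inter_Ico_add_ncard_inter_Ico (T : Set ℤ) {x y z : ℤ} (hxy : x ≤ y) (hyz : y ≤ z) :
    (T ∩ Set.Ico x y).ncard + (T ∩ Set.Ico y z).ncard = (T ∩ Set.Ico x z).ncard := by
  rw [← Set.Ico_union_Ico_eq_Ico hxy hyz, Set.inter_union_distrib_left]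
  exact (Set.ncard_union_eq
    (Set.Ico_disjoint_Ico_same.mono Set.inter_subset_right Set.inter_subset_right)
    ((Set.finite_Ico x y).inter_of_right T) ((Set.finite_Ico y z).inter_of_right T)).symm

noncomputable def signedCount (T : Set ℤ) (t : ℤ) : ℤ :=
  (T ∩ Set.Ico 0 t).ncard - (T ∩ Set.Ico t 0).ncard

theorem signedCount_sub_signedCount (T : Set ℤ) {x y : ℤ} (hxy : x ≤ y) :
    signedCount T y - signedCount T x = (T ∩ Set.Ico x y).ncard := by
  have empty : ∀ {u v : ℤ}, v ≤ u → (T ∩ Set.Ico u v).ncard = 0 := fun h => by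
    rw [Set.Ico_eq_empty h.not_gt, Set.inter_empty, Set.ncard_empty]
  unfold signedCount
  rcases le_total 0 x with h0x | hx0
  · have := ncard_inter_Ico_add_ncard_inter_Ico T h0x hxy
    rw [empty h0x, empty (h0x.trans hxy)]
    omega
  rcases le_total 0 y with h0y | hy0
  · have := ncard_inter_Ico_add_ncard_inter_Ico T hx0 h0y
    rw [empty hx0, empty h0y]
    omega
  · have := ncard_inter_Ico_add_ncard_inter_Ico T hxy hy0
    rw [empty hx0, empty hy0]
    omega

theorem Spaced.inter_Ico_eq_singleton {b : ℤ} {T : Set ℤ} (h : Spaced b T) {s t : ℤ}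
    (hs : s ∈ T) (ht : t ∈ T) (hst : s < t) (hgap : t - s < 2 * b) :
    T ∩ Set.Ico s t = {s} := by
  refine Set.eq_singleton_iff_unique_mem.mpr ⟨⟨hs, le_rfl, hst⟩, ?_⟩
  rintro u ⟨hu, hsu, hut⟩
  by_contra! hne
  have := h s hs u hu (lt_of_le_of_ne hsu hne.symm)
  have := h u hu t ht hut
  omega

theorem Spaced.signedCount_eq_add_one {b : ℤ} {T : Set ℤ} (h : Spaced b T) {s t : ℤ}
    (hs : s ∈ T) (ht : t ∈ T) (hst : s < t) (hgap : t - s < 2 * b) :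
    signedCount T t = signedCount T s + 1 := by
  have := signedCount_sub_signedCount T hst.le
  rw [h.inter_Ico_eq_singleton hs ht hst hgap, Set.ncard_singleton] at this
  omega

theorem Spaced.exists_split {b : ℤ} {T : Set ℤ} (h : Spaced b T) :
    ∃ T₀ ⊆ T, Spaced (2 * b) T₀ ∧ Spaced (2 * b) (T \ T₀) := by
  refine ⟨{t ∈ T | Even (signedCount T t)}, fun t ht => ht.1, ?_, ?_⟩
  · rintro s ⟨hs, hs₀⟩ t ⟨ht, ht₀⟩ hst
    by_contra! hgap
    rw [h.signedCount_eq_add_one hs ht hst hgap, Int.even_add_one] at ht₀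
    exact ht₀ hs₀
  · rintro s ⟨hs, hs₀⟩ t ⟨ht, ht₀⟩ hst
    by_contra! hgap
    simp only [Set.mem_ofPred_eq, hs, ht, true_and,
      h.signedCount_eq_add_one hs ht hst hgap, Int.even_add_one] at hs₀ ht₀
    exact ht₀ hs₀

theorem Int.le_two_mul_ceil_half (n : ℤ) : n ≤ 2 * ⌈(n : ℚ) / 2⌉ := by
  have := Int.le_ceil ((n : ℚ) / 2)
  exact_mod_cast (by linarith : (n : ℚ) ≤ 2 * ⌈(n : ℚ) / 2⌉)

theorem Schedulable.of_castSucc {n : ℕ} {a : Fin (n + 1) → ℤ} {a' : Fin n → ℤ}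
    (h : Schedulable a') (hle : ∀ j, a j.castSucc ≤ a' j) : Schedulable a := by
  obtain ⟨S', hS'⟩ := (schedulable_iff_spaced a').mp h
  refine (schedulable_iff_spaced a).mpr ⟨fun t => (S' t).castSucc, fun i => ?_⟩
  induction i using Fin.lastCases with
  | last => exact fun s hs => absurd hs (Fin.castSucc_ne_last _)
  | cast j =>
    refine (hS' j).mono (fun t ht => ?_) (hle j)
    exact Fin.castSucc_injective _ ht

theorem Schedulable.of_split_last {n : ℕ} {a : Fin (n + 2) → ℤ} {a' : Fin (n + 1) → ℤ}
    (h : Schedulable a') (hle : ∀ j, j ≠ Fin.last n → a j.castSucc ≤ a' j)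
    (hlast : a (Fin.last n).castSucc ≤ 2 * a' (Fin.last n))
    (hnew : a (Fin.last (n + 1)) ≤ 2 * a' (Fin.last n)) : Schedulable a := by
  classical
  obtain ⟨S', hS'⟩ := (schedulable_iff_spaced a').mp h
  obtain ⟨T₀, hT₀, hspaced₀, hspaced₁⟩ := (hS' (Fin.last n)).exists_split
  refine (schedulable_iff_spaced a).mpr
    ⟨fun t => if t ∈ T₀ then Fin.last (n + 1) else (S' t).castSucc, fun i => ?_⟩
  induction i using Fin.lastCases with
  | last =>
    refine hspaced₀.mono (fun t ht => ?_) hnew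
    by_contra hT
    simp [hT] at ht
  | cast j =>
    have hpre : (fun t => if t ∈ T₀ then Fin.last (n + 1) else (S' t).castSucc) ⁻¹'
        {j.castSucc} = S' ⁻¹' {j} \ T₀ := by
      ext t
      by_cases ht : t ∈ T₀ <;> simp [ht, eq_comm]
    rw [hpre]
    by_cases hj : j = Fin.last n
    · subst hj
      exact hspaced₁.mono subset_rfl hlast
    · exact (hS' j).mono Set.sdiff_subset (hle j hj)

/-- Folding: replacing the last two agents of A (periods a_{k-1} ≤ a_k) by a single
agent of period min{a_{k-1}, ⌈a_k/2⌉} preserves unschedulability; equivalently,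
if the folded instance A' is schedulable, so is A. -/
theorem schedulable_of_fold (k : ℕ) (a : Fin (k + 2) → ℤ)
    (hmono : Monotone a)
    (h : Schedulable (fun i : Fin (k + 1) =>
      if (i : ℕ) < k then a ⟨i, by omega⟩
      else min (a ⟨k, by omega⟩) ⌈(a ⟨k + 1, by omega⟩ : ℚ) / 2⌉)) :
    Schedulable a := by
  have hinit : ∀ j : Fin (k + 1), j ≠ Fin.last k →
      a j.castSucc ≤ if (j : ℕ) < k then a ⟨j, by omega⟩
        else min (a ⟨k, by omega⟩) ⌈(a ⟨k + 1, by omega⟩ : ℚ) / 2⌉ := fun j hj => by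
    rw [if_pos (Fin.val_lt_last hj)]; rfl
  have hstep : a ⟨k, by omega⟩ ≤ a ⟨k + 1, by omega⟩ := hmono (Fin.mk_le_mk.mpr k.le_succ)
  have hk : a (Fin.last k).castSucc = a ⟨k, by omega⟩ := rfl
  have hk1 : a (Fin.last (k + 1)) = a ⟨k + 1, by omega⟩ := rfl
  have hceil := Int.le_two_mul_ceil_half (a ⟨k + 1, by omega⟩)
  rcases le_total (a ⟨k, by omega⟩) ⌈(a ⟨k + 1, by omega⟩ : ℚ) / 2⌉ with hmin | hmin
  · refine h.of_castSucc fun j => ?_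
    by_cases hj : j = Fin.last k
    · subst hj
      simp [hk, min_eq_left hmin]
    · exact hinit j hj
  · refine h.of_split_last hinit ?_ ?_ <;>
      simp only [hk, hk1, Fin.val_last, lt_irrefl, if_false, min_eq_right hmin] <;> omega
end

section
/- Let A = (a_1,…,a_k) be an unschedulable instance of positive integers, let p ≥ 0, and suppose agent i is employed exactly once every 2^i days for i ∈ [p] with a_i ≤ 2^i, and define b_i = ⌈a_{p+i}/2^p⌉ for i ∈ [k-p]. If B = (b_1,…,b_{k-p}) is covering-schedulable, then A is covering-schedulable. (Claim 2: the dilation-by-2^p construction transfers schedulability from B to A.) -/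
theorem schedulable_iff {k : ℕ} (a : Fin k → ℤ) :
    Schedulable a ↔ ∃ S : ℤ → Fin k, ∀ (i : Fin k) (t₁ t₂ : ℤ),
      S t₁ = i → S t₂ = i → |t₁ - t₂| < a i → t₁ = t₂ := by
  refine exists_congr fun S => ⟨fun h i t₁ t₂ h₁ h₂ hlt => ?_, fun h i m => ?_⟩
  · rw [abs_lt] at hlt
    exact h i (min t₁ t₂) ⟨min_le_left _ _, by omega, h₁⟩ ⟨min_le_right _ _, by omega, h₂⟩
  · rintro t₁ ⟨hm₁, hlt₁, h₁⟩ t₂ ⟨hm₂, hlt₂, h₂⟩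
    exact h i t₁ t₂ h₁ h₂ (abs_sub_lt_iff.2 ⟨by omega, by omega⟩)

theorem Int.emod_two_pow_padicValInt_succ {t : ℤ} (ht : t ≠ 0) :
    t % 2 ^ (padicValInt 2 t + 1) = 2 ^ padicValInt 2 t := by
  set v := padicValInt 2 t
  obtain ⟨u, hu⟩ : (2 : ℤ) ^ v ∣ t := padicValInt_dvd t
  have hu_odd : ¬ 2 ∣ u := fun ⟨w, hw⟩ => by
    have := (padicValInt_dvd_iff (p := 2) (v + 1) t).1 ⟨w, by rw [hu, hw]; push_cast; ring⟩
    omega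
  obtain ⟨w, rfl⟩ : ∃ w, u = 2 * w + 1 := ⟨u / 2, by omega⟩
  rw [hu, show (2 : ℤ) ^ v * (2 * w + 1) = 2 ^ v + 2 ^ (v + 1) * w by ring,
    Int.add_mul_emod_self_left]
  exact Int.emod_eq_of_lt (by positivity) (pow_lt_pow_right₀ (by norm_num) (by omega))

theorem padicValInt_two_lt_of_not_dvd {p : ℕ} {t : ℤ} (h : ¬ (2 : ℤ) ^ p ∣ t) :
    padicValInt 2 t < p := by
  by_contra! hle
  exact h ((padicValInt_dvd_iff (p := 2) p t).2 (Or.inr hle))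

theorem le_two_pow_mul_ceil_div (p : ℕ) (x : ℤ) : x ≤ 2 ^ p * ⌈(x : ℚ) / 2 ^ p⌉ := by
  have h : (x : ℚ) / 2 ^ p ≤ ⌈(x : ℚ) / 2 ^ p⌉ := Int.le_ceil _
  rw [div_le_iff₀ (by positivity)] at h
  exact_mod_cast h.trans_eq (mul_comm _ _)

section Dilation

variable {k p : ℕ} (hpk : p ≤ k) (S' : ℤ → Fin (k - p))

/-- Agents are `0`-indexed, so agent `i < p` is the paper's agent `i + 1`, working on the days
`t ≡ 2^i [ZMOD 2^(i+1)]`. -/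
def dilatedSchedule (t : ℤ) : Fin k :=
  if h : (2 : ℤ) ^ p ∣ t then ⟨p + S' (t / 2 ^ p), by omega⟩
  else ⟨padicValInt 2 t, (padicValInt_two_lt_of_not_dvd h).trans_le hpk⟩

variable {hpk S'} {i : Fin k} {t₁ t₂ : ℤ}

theorem dilatedSchedule_eq_of_lt (hip : (i : ℕ) < p) {t : ℤ} (h : dilatedSchedule hpk S' t = i) :
    t ≠ 0 ∧ padicValInt 2 t = i := by
  unfold dilatedSchedule at h
  split_ifs at h with hdvd
  · have : p + (S' (t / 2 ^ p) : ℕ) = i := congrArg Fin.val h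
    omega
  · exact ⟨by rintro rfl; exact hdvd (dvd_zero _), congrArg Fin.val h⟩

theorem dilatedSchedule_eq_of_le (hip : p ≤ (i : ℕ)) {t : ℤ} (h : dilatedSchedule hpk S' t = i) :
    (2 : ℤ) ^ p ∣ t ∧ p + (S' (t / 2 ^ p) : ℕ) = i := by
  unfold dilatedSchedule at h
  split_ifs at h with hdvd
  · exact ⟨hdvd, congrArg Fin.val h⟩
  · have hv : padicValInt 2 t = i := congrArg Fin.val h
    have := padicValInt_two_lt_of_not_dvd hdvd
    omega

theorem dilatedSchedule_inj_of_lt (hip : (i : ℕ) < p) (h₁ : dilatedSchedule hpk S' t₁ = i)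
    (h₂ : dilatedSchedule hpk S' t₂ = i) (hlt : |t₁ - t₂| < 2 ^ ((i : ℕ) + 1)) : t₁ = t₂ := by
  obtain ⟨hne₁, hv₁⟩ := dilatedSchedule_eq_of_lt hip h₁
  obtain ⟨hne₂, hv₂⟩ := dilatedSchedule_eq_of_lt hip h₂
  have hmod : t₂ ≡ t₁ [ZMOD 2 ^ ((i : ℕ) + 1)] := by
    rw [Int.ModEq, ← hv₁, Int.emod_two_pow_padicValInt_succ hne₁, hv₁, ← hv₂,
      Int.emod_two_pow_padicValInt_succ hne₂]
  exact sub_eq_zero.1 (Int.eq_zero_of_abs_lt_dvd hmod.dvd hlt)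

theorem dilatedSchedule_inj_of_le {b : Fin (k - p) → ℤ}
    (hS' : ∀ j s₁ s₂, S' s₁ = j → S' s₂ = j → |s₁ - s₂| < b j → s₁ = s₂) (hip : p ≤ (i : ℕ))
    (h₁ : dilatedSchedule hpk S' t₁ = i) (h₂ : dilatedSchedule hpk S' t₂ = i)
    (hlt : |t₁ - t₂| < 2 ^ p * b ⟨i - p, by omega⟩) : t₁ = t₂ := by
  obtain ⟨⟨s₁, rfl⟩, hj₁⟩ := dilatedSchedule_eq_of_le hip h₁
  obtain ⟨⟨s₂, rfl⟩, hj₂⟩ := dilatedSchedule_eq_of_le hip h₂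
  have h2p : (2 : ℤ) ^ p ≠ 0 := by positivity
  simp only [Int.mul_ediv_cancel_left _ h2p] at hj₁ hj₂
  rw [← mul_sub, abs_mul, abs_of_pos (by positivity), mul_lt_mul_iff_right₀ (by positivity)] at hlt
  congr 1
  exact hS' _ s₁ s₂ (Fin.ext (by simp; omega)) (Fin.ext (by simp; omega)) hlt

end Dilation

/-- Claim 2: the dilation-by-2^p construction transfers schedulability from
B = (⌈a_{p+i}/2^p⌉)_i to A, provided a_i ≤ 2^i for i ∈ [p] (0-indexed: a_i ≤ 2^{i+1}). -/
theorem claim_two {k p : ℕ} (hpk : p ≤ k) (a : Fin k → ℤ)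
    (hle : ∀ i : Fin k, (i : ℕ) < p → a i ≤ 2 ^ ((i : ℕ) + 1))
    (hB : Schedulable (fun i : Fin (k - p) =>
      ⌈(a ⟨p + i.1, by have := i.2; omega⟩ : ℚ) / 2 ^ p⌉)) :
    Schedulable a := by
  obtain ⟨S', hS'⟩ := (schedulable_iff _).1 hB
  refine (schedulable_iff a).2 ⟨dilatedSchedule hpk S', fun i t₁ t₂ h₁ h₂ hlt => ?_⟩
  by_cases hip : (i : ℕ) < p
  · exact dilatedSchedule_inj_of_lt hip h₁ h₂ (hlt.trans_le (hle i hip))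
  · refine dilatedSchedule_inj_of_le hS' (not_lt.1 hip) h₁ h₂ (hlt.trans_le ?_)
    have hi : a ⟨p + (i - p), by omega⟩ = a i := congrArg a (Fin.ext (by simp; omega))
    simpa only [hi] using le_two_pow_mul_ceil_div p (a i)
end

section
/- The instance (2, 3, 5, 9) cannot cover 16 consecutive days: there is no S : [0,16) ∩ ℤ → Fin 4 with agent i assigned at most once in any a_i consecutive days, where (a_1,a_2,a_3,a_4) = (2,3,5,9). -/
/-!
Record, for each agent `i`, the number `g i` of days since it last served (any value `≥ a i`
meaning "free"). A valid schedule walks through these gap vectors: the agent `j` chosen on a day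
needs `a j ≤ g j`, and afterwards its gap becomes `1` while all others grow by one. The finitely
many such walks starting from the all-free vector can be enumerated depth first, and for
`a = (2, 3, 5, 9)` none of them survives 16 days.
-/

section Schedules

variable {k : ℕ}

def IsSpaced (a : Fin k → ℕ) (S : ℤ → Fin k) (lo hi : ℤ) : Prop :=
  ∀ i s t, lo ≤ s → s < t → t < hi → S s = i → S t = i → s + a i ≤ t

def GapsBound (a : Fin k → ℕ) (S : ℤ → Fin k) (lo t : ℤ) (g : Fin k → ℕ) : Prop :=
  ∀ i, g i < a i → ∃ s, lo ≤ s ∧ s < t ∧ S s = i ∧ t - s ≤ g i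

def gapsAfter (g : Fin k → ℕ) (j : Fin k) : Fin k → ℕ :=
  fun i => if i = j then 1 else g i + 1

def CanExtend (a : Fin k → ℕ) : ℕ → (Fin k → ℕ) → Bool
  | 0, _ => true
  | n + 1, g =>
    (List.finRange k).any fun j => decide (a j ≤ g j) && CanExtend a n (gapsAfter g j)

variable {a : Fin k → ℕ} {S : ℤ → Fin k} {lo hi : ℤ}

theorem isSpaced_of_subsingleton
    (hS : ∀ i m, {t : ℤ | lo ≤ t ∧ t < hi ∧ m ≤ t ∧ t < m + a i ∧ S t = i}.Subsingleton) :
    IsSpaced a S lo hi := by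
  intro i s t hs hst ht hSs hSt
  by_contra! hnear
  have hsame : s = t :=
    hS i s ⟨hs, hst.trans ht, le_rfl, by omega, hSs⟩ ⟨by omega, ht, hst.le, hnear, hSt⟩
  omega

theorem gapsBound_self : GapsBound a S lo lo a :=
  fun _ hi => absurd hi (lt_irrefl _)

theorem GapsBound.le_of_isSpaced {t : ℤ} {g : Fin k → ℕ} (hg : GapsBound a S lo t g)
    (hS : IsSpaced a S lo hi) (ht : t < hi) : a (S t) ≤ g (S t) := by
  by_contra! hlt
  obtain ⟨s, hs, hst, hSs, hgap⟩ := hg (S t) hlt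
  have := hS (S t) s t hs hst ht hSs rfl
  omega

theorem GapsBound.gapsAfter {t : ℤ} {g : Fin k → ℕ} (hg : GapsBound a S lo t g) (ht : lo ≤ t) :
    GapsBound a S lo (t + 1) (gapsAfter g (S t)) := by
  intro i hi
  by_cases hij : i = S t
  · exact ⟨t, ht, by omega, hij.symm, by simp [_root_.gapsAfter, hij]⟩
  · simp only [_root_.gapsAfter, hij, if_false] at hi ⊢
    obtain ⟨s, hs, hst, hSs, hgap⟩ := hg i (by omega)
    exact ⟨s, hs, by omega, hSs, by push_cast; omega⟩

theorem canExtend_of_isSpaced (hS : IsSpaced a S lo hi) :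
    ∀ (n : ℕ) (t : ℤ) (g : Fin k → ℕ), lo ≤ t → t + n ≤ hi → GapsBound a S lo t g →
      CanExtend a n g = true
  | 0, _, _, _, _, _ => rfl
  | n + 1, t, g, hlo, hhi, hg => by
    rw [CanExtend, List.any_eq_true]
    refine ⟨S t, List.mem_finRange _, ?_⟩
    rw [Bool.and_eq_true, decide_eq_true_eq]
    exact ⟨hg.le_of_isSpaced hS (by omega),
      canExtend_of_isSpaced hS n (t + 1) _ (by omega) (by push_cast at hhi ⊢; omega)
        (hg.gapsAfter hlo)⟩

end Schedules

theorem canExtend_sixteen : CanExtend ![2, 3, 5, 9] 16 ![2, 3, 5, 9] = false := by decide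

/-- The instance (2, 3, 5, 9) cannot cover the 16 consecutive days [0, 16). -/
theorem B4_cannot_cover_sixteen_days :
    ¬ ∃ S : ℤ → Fin 4, ∀ (i : Fin 4) (m : ℤ),
      Set.Subsingleton
        {t : ℤ | 0 ≤ t ∧ t < 16 ∧ m ≤ t ∧ t < m + (![2, 3, 5, 9] : Fin 4 → ℤ) i ∧ S t = i} := by
  rintro ⟨S, hS⟩
  have hcast : (![2, 3, 5, 9] : Fin 4 → ℤ) = fun i => ((![2, 3, 5, 9] : Fin 4 → ℕ) i : ℤ) := by
    funext i; fin_cases i <;> rfl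
  rw [hcast] at hS
  have hspaced : IsSpaced ![2, 3, 5, 9] S 0 16 := isSpaced_of_subsingleton hS
  have := canExtend_of_isSpaced hspaced 16 0 _ le_rfl (by norm_num) gapsBound_self
  rw [canExtend_sixteen] at this
  exact Bool.false_ne_true this
end
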